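/- arXiv:2206.02326 — 4 statements merged into one kernel-verified Lean document; each statement's English description precedes it below -/
import Mathlib

section
/- For any two probability distributions f and g (with densities with respect to a common base measure) and any constant λ ∈ (0,1/2), the KL divergence and Rényi divergence of order 1-λ satisfy D_KL(f‖g) - D_{1-λ}(f‖g) ≤ (λ/2) · (E_{o~f}[(ln(f(o)/g(o)))^4])^{1/2}. -/
open MeasureTheory Real


-- scalar core inequality: exp s ≤ 1 + s + s^2/2 * (2/3 + exp s / 3)
private noncomputable def Gfun (s : ℝ) : ℝ := 1 + s*(2/3 + Real.exp s/3) + s^2/6 * Real.exp s - Real.exp s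
private noncomputable def Ffun (s : ℝ) : ℝ := 1 + s + s^2/2*(2/3 + Real.exp s/3) - Real.exp s

private lemma hasDerivAt_F (s : ℝ) : HasDerivAt Ffun (Gfun s) s := by
  have he := Real.hasDerivAt_exp s
  have hs : HasDerivAt (fun s : ℝ => s) 1 s := hasDerivAt_id s
  have h := (((hasDerivAt_const s (1:ℝ)).add hs).add
      (((hs.pow 2).div_const 2).mul (((hasDerivAt_const s (2/3:ℝ)).add (he.div_const 3))))).sub he
  refine HasDerivAt.congr_deriv h ?_
  simp [Gfun]; push_cast; ring

private lemma hasDerivAt_G (s : ℝ) :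
    HasDerivAt Gfun (2/3 - Real.exp s * (2/3) * (1 - s - s^2/4)) s := by
  have he := Real.hasDerivAt_exp s
  have hs : HasDerivAt (fun s : ℝ => s) 1 s := hasDerivAt_id s
  have h := (((hasDerivAt_const s (1:ℝ)).add
      (hs.mul ((hasDerivAt_const s (2/3:ℝ)).add (he.div_const 3)))).add
      (((hs.pow 2).div_const 6).mul he)).sub he
  refine HasDerivAt.congr_deriv h ?_
  simp only [Pi.add_apply, Pi.pow_apply]; push_cast; ring

private lemma G_deriv_nonneg (s : ℝ) : 0 ≤ 2/3 - Real.exp s * (2/3) * (1 - s - s^2/4) := by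
  have h1 : 1 - s ≤ Real.exp (-s) := by linarith [Real.add_one_le_exp (-s)]
  have h2 : Real.exp s * (1 - s) ≤ 1 := by
    calc Real.exp s * (1 - s) ≤ Real.exp s * Real.exp (-s) :=
          mul_le_mul_of_nonneg_left h1 (Real.exp_pos s).le
      _ = 1 := by rw [← Real.exp_add]; simp
  nlinarith [Real.exp_pos s, sq_nonneg s]

private lemma G_mono : Monotone Gfun := by
  have hd : ∀ s, HasDerivAt Gfun (2/3 - Real.exp s * (2/3) * (1 - s - s^2/4)) s := hasDerivAt_G
  have : ∀ s, 0 ≤ deriv Gfun s := fun s => by rw [(hd s).deriv]; exact G_deriv_nonneg s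
  exact monotone_of_deriv_nonneg (fun s => (hd s).differentiableAt) this

private lemma G_zero : Gfun 0 = 0 := by simp [Gfun]

lemma core_ineq (s : ℝ) : Real.exp s ≤ 1 + s + s^2/2 * (2/3 + Real.exp s/3) := by
  have hF : 0 ≤ Ffun s := by
    have hF0 : Ffun 0 = 0 := by simp [Ffun]
    have hdiff : ∀ x, DifferentiableAt ℝ Ffun x := fun x => (hasDerivAt_F x).differentiableAt
    rcases le_total 0 s with hs | hs
    · have hmono : MonotoneOn Ffun (Set.Ici 0) := by
        apply monotoneOn_of_deriv_nonneg (convex_Ici 0)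
          (fun x _ => (hdiff x).continuousAt.continuousWithinAt)
          (fun x _ => (hdiff x).differentiableWithinAt)
        intro x hx
        rw [(hasDerivAt_F x).deriv]
        have : (0:ℝ) ≤ x := le_of_lt (by simpa using hx)
        have := G_mono this
        rw [G_zero] at this; exact this
      have := hmono (Set.mem_Ici.2 le_rfl) (Set.mem_Ici.2 hs) hs
      rwa [hF0] at this
    · have hmono : AntitoneOn Ffun (Set.Iic 0) := by
        apply antitoneOn_of_deriv_nonpos (convex_Iic 0)
          (fun x _ => (hdiff x).continuousAt.continuousWithinAt)
          (fun x _ => (hdiff x).differentiableWithinAt)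
        intro x hx
        rw [(hasDerivAt_F x).deriv]
        have hx0 : x ≤ (0:ℝ) := le_of_lt (by simpa using hx)
        have := G_mono hx0
        rw [G_zero] at this; exact this
      have := hmono (Set.mem_Iic.2 hs) (Set.mem_Iic.2 le_rfl) hs
      rwa [hF0] at this
  simp only [Ffun] at hF
  linarith

set_option maxHeartbeats 1000000 in
/-- Lemma 15 of the paper: for probability densities `f, g` w.r.t. `μ` and `λ ∈ (0,1/2)`,
`D_KL(f‖g) - D_{1-λ}(f‖g) ≤ (λ/2) · (E_{o~f}[(ln(f(o)/g(o)))^4])^{1/2}`, where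
`D_KL(f‖g) = ∫ f ln(f/g)` and `D_{1-λ}(f‖g) = -(1/λ) ln ∫ f^{1-λ} g^λ`. -/
theorem kl_sub_renyi_le_fourth_moment {Ω : Type*} [MeasurableSpace Ω] (μ : Measure Ω)
    (f g : Ω → ℝ) (hf0 : ∀ x, 0 ≤ f x) (hg0 : ∀ x, 0 ≤ g x)
    (hf1 : ∫ x, f x ∂μ = 1) (hg1 : ∫ x, g x ∂μ = 1)
    (hmom : Integrable (fun x => f x * (Real.log (f x / g x)) ^ 4) μ)
    (l : ℝ) (hl : 0 < l) (hl' : l < 1 / 2) :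
    (∫ x, f x * Real.log (f x / g x) ∂μ)
        - (-(1 / l) * Real.log (∫ x, f x ^ (1 - l) * g x ^ l ∂μ))
      ≤ (l / 2) * Real.sqrt (∫ x, f x * (Real.log (f x / g x)) ^ 4 ∂μ) := by
  have hl2 : 0 < 1 - 2*l := by linarith
  have hl1 : 0 < 1 - l := by linarith
  set u : Ω → ℝ := fun x => Real.log (f x / g x) with hu
  set p : Ω → ℝ := fun x => f x ^ (1 - l) * g x ^ l with hp
  set q : Ω → ℝ := fun x => f x ^ (1 - 2*l) * g x ^ (2*l) with hq
  -- basic integrability / measurability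
  have hfi : Integrable f μ := by
    by_contra h; rw [integral_undef h] at hf1; norm_num at hf1
  have hgi : Integrable g μ := by
    by_contra h; rw [integral_undef h] at hg1; norm_num at hg1
  have hfm : AEMeasurable f μ := hfi.aestronglyMeasurable.aemeasurable
  have hgm : AEMeasurable g μ := hgi.aestronglyMeasurable.aemeasurable
  have hum : AEMeasurable u μ := Real.measurable_log.comp_aemeasurable (hfm.div hgm)
  have hpm : AEMeasurable p μ :=
    ((Real.continuous_rpow_const hl1.le).measurable.comp_aemeasurable hfm).mul
      ((Real.continuous_rpow_const hl.le).measurable.comp_aemeasurable hgm)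
  have hqm : AEMeasurable q μ :=
    ((Real.continuous_rpow_const hl2.le).measurable.comp_aemeasurable hfm).mul
      ((Real.continuous_rpow_const (by linarith : (0:ℝ) ≤ 2*l)).measurable.comp_aemeasurable hgm)
  have hp0 : ∀ x, 0 ≤ p x := fun x => mul_nonneg (Real.rpow_nonneg (hf0 x) _) (Real.rpow_nonneg (hg0 x) _)
  have hq0 : ∀ x, 0 ≤ q x := fun x => mul_nonneg (Real.rpow_nonneg (hf0 x) _) (Real.rpow_nonneg (hg0 x) _)
  -- integrable pieces
  have hpint : Integrable p μ := by
    apply Integrable.mono' ((hfi.const_mul (1-l)).add (hgi.const_mul l)) hpm.aestronglyMeasurable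
    filter_upwards with x
    rw [Real.norm_eq_abs, abs_of_nonneg (hp0 x)]
    exact Real.geom_mean_le_arith_mean2_weighted hl1.le hl.le (hf0 x) (hg0 x) (by ring)
  have hqint : Integrable q μ := by
    apply Integrable.mono' ((hfi.const_mul (1-2*l)).add (hgi.const_mul (2*l))) hqm.aestronglyMeasurable
    filter_upwards with x
    rw [Real.norm_eq_abs, abs_of_nonneg (hq0 x)]
    exact Real.geom_mean_le_arith_mean2_weighted hl2.le (by linarith) (hf0 x) (hg0 x) (by ring)
  have hfu2 : Integrable (fun x => f x * u x ^ 2) μ := by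
    apply Integrable.mono' ((hfi.add hmom).const_mul (1/2))
      (hfm.mul (hum.pow_const 2)).aestronglyMeasurable
    filter_upwards with x
    dsimp only [Pi.mul_apply, Pi.add_apply]
    rw [Real.norm_eq_abs, abs_of_nonneg (mul_nonneg (hf0 x) (sq_nonneg _))]
    have h1 : u x ^ 2 ≤ (1 + u x ^ 4)/2 := by nlinarith [sq_nonneg (u x ^ 2 - 1)]
    have := mul_le_mul_of_nonneg_left h1 (hf0 x)
    calc f x * u x ^ 2 ≤ f x * ((1 + u x ^ 4)/2) := this
      _ = 1/2 * (f x + f x * u x ^ 4) := by ring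
  have hfu1 : Integrable (fun x => f x * u x) μ := by
    apply Integrable.mono' (hfi.add hmom) (hfm.mul hum).aestronglyMeasurable
    filter_upwards with x
    dsimp only [Pi.mul_apply, Pi.add_apply]
    rw [Real.norm_eq_abs, abs_mul, abs_of_nonneg (hf0 x)]
    have h1 : |u x| ≤ 1 + u x ^ 4 := by
      rcases le_total (|u x|) 1 with h | h
      · nlinarith [sq_nonneg (u x ^ 2)]
      · have h2 : |u x| ≤ |u x| ^ 4 := le_self_pow₀ h (by norm_num)
        have h3 : |u x| ^ 4 = u x ^ 4 := by
          rw [show |u x| ^ 4 = (|u x| ^ 2) ^ 2 by ring, sq_abs]; ring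
        nlinarith
    have := mul_le_mul_of_nonneg_left h1 (hf0 x)
    calc f x * |u x| ≤ f x * (1 + u x ^ 4) := this
      _ = f x + f x * u x ^ 4 := by ring
  -- pointwise AM-GM for p * u^2
  have hkeyB : ∀ t : ℝ, 0 < t → ∀ x, p x * u x ^ 2 ≤ t/2 * (f x * u x ^ 4) + 1/(2*t) * q x := by
    intro t ht x
    rcases eq_or_lt_of_le (hf0 x) with hf | hf
    · have hpx : p x = 0 := by
        simp only [hp, ← hf, Real.zero_rpow (ne_of_gt hl1), zero_mul]
      rw [hpx, zero_mul]
      have : q x = 0 := by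
        simp only [hq, ← hf, Real.zero_rpow (ne_of_gt hl2), zero_mul]
      rw [this, ← hf]
      ring_nf
      positivity
    rcases eq_or_lt_of_le (hg0 x) with hg | hg
    · have hpx : p x = 0 := by
        simp only [hp, ← hg, Real.zero_rpow (ne_of_gt hl), mul_zero]
      rw [hpx, zero_mul]
      positivity
    -- main case: f x > 0, g x > 0
    have hp2 : p x ^ 2 = f x * q x := by
      simp only [hp, hq]
      rw [mul_pow, ← Real.rpow_natCast (f x ^ (1-l)) 2, ← Real.rpow_natCast (g x ^ l) 2,
        ← Real.rpow_mul (hf0 x), ← Real.rpow_mul (hg0 x)]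
      push_cast
      rw [show (1-l)*2 = 1 + (1-2*l) by ring, Real.rpow_add hf, Real.rpow_one,
        show l*2 = 2*l by ring]
      ring
    have hA : 0 ≤ f x * u x ^ 4 := mul_nonneg (hf0 x) (by positivity)
    have hB : 0 ≤ q x := hq0 x
    have hP : 0 ≤ p x := hp0 x
    have hu4 : (p x * u x ^ 2) ^ 2 = (f x * u x ^ 4) * q x := by
      rw [mul_pow, hp2, show (u x ^ 2) ^ 2 = u x ^ 4 by ring]; ring
    rcases eq_or_lt_of_le hB with hB0 | hB0
    · have : (p x * u x ^ 2) ^ 2 = 0 := by rw [hu4, ← hB0, mul_zero]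
      have hP0 : p x * u x ^ 2 = 0 := by
        exact pow_eq_zero_iff (by norm_num) |>.mp this
      rw [hP0, ← hB0]
      positivity
    · have key2 : 2*t*(p x * u x ^ 2) ≤ t^2 * (f x * u x ^ 4) + q x := by
        nlinarith [sq_nonneg (t*(p x * u x ^ 2) - q x), hu4, hB0,
          mul_nonneg (mul_nonneg hP (sq_nonneg (u x))) hB]
      have h2t : (0:ℝ) < 2*t := by linarith
      have := (div_le_div_iff_of_pos_right h2t).mpr key2
      calc p x * u x ^ 2 = (2*t*(p x * u x ^ 2))/(2*t) := by field_simp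
        _ ≤ (t^2 * (f x * u x ^ 4) + q x)/(2*t) := this
        _ = t/2 * (f x * u x ^ 4) + 1/(2*t) * q x := by field_simp
  have hpu2 : Integrable (fun x => p x * u x ^ 2) μ := by
    apply Integrable.mono' ((hmom.const_mul (1/2)).add (hqint.const_mul (1/2)))
      (hpm.mul (hum.pow_const 2)).aestronglyMeasurable
    filter_upwards with x
    dsimp only [Pi.mul_apply, Pi.add_apply]
    rw [Real.norm_eq_abs, abs_of_nonneg (mul_nonneg (hp0 x) (sq_nonneg _))]
    have := hkeyB 1 one_pos x
    calc p x * u x ^ 2 ≤ 1/2 * (f x * u x ^ 4) + 1/(2*1) * q x := this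
      _ = 1/2 * (f x * u x ^ 4) + 1/2 * q x := by norm_num
  -- main pointwise inequality
  have hkeyA : ∀ x, p x ≤ f x - l * (f x * u x)
      + l^2/2 * (2/3 * (f x * u x ^ 2) + 1/3 * (p x * u x ^ 2)) := by
    intro x
    rcases eq_or_lt_of_le (hf0 x) with hf | hf
    · have hpx : p x = 0 := by
        simp only [hp, ← hf, Real.zero_rpow (ne_of_gt hl1), zero_mul]
      rw [hpx, ← hf]
      ring_nf
      positivity
    rcases eq_or_lt_of_le (hg0 x) with hg | hg
    · have hpx : p x = 0 := by
        simp only [hp, ← hg, Real.zero_rpow (ne_of_gt hl), mul_zero]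
      have hux : u x = 0 := by
        simp only [hu, ← hg, div_zero, Real.log_zero]
      rw [hpx, hux]
      ring_nf
      exact hf.le
    -- f x > 0, g x > 0
    have hux : u x = Real.log (f x) - Real.log (g x) := by
      simp only [hu]; exact Real.log_div hf.ne' hg.ne'
    have hpx : p x = f x * Real.exp (-(l * u x)) := by
      simp only [hp]
      rw [hux, Real.rpow_def_of_pos hf, Real.rpow_def_of_pos hg, ← Real.exp_add]
      conv_rhs => rw [← Real.exp_log hf]
      rw [← Real.exp_add]
      congr 1
      rw [Real.log_exp]
      ring
    set s : ℝ := -(l * u x) with hs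
    have hcore := core_ineq s
    have h2 := mul_le_mul_of_nonneg_left hcore hf.le
    rw [hpx]
    calc f x * Real.exp s ≤ f x * (1 + s + s^2/2 * (2/3 + Real.exp s/3)) := h2
      _ = f x - l * (f x * u x) + l^2/2 * (2/3 * (f x * u x ^ 2)
            + 1/3 * ((f x * Real.exp s) * u x ^ 2)) := by rw [hs]; ring
  -- integral quantities
  set M := ∫ x, f x * u x ^ 4 ∂μ with hM
  have hM0 : 0 ≤ M := integral_nonneg fun x => mul_nonneg (hf0 x) (by positivity)
  set S := Real.sqrt M with hS
  have hS0 : 0 ≤ S := Real.sqrt_nonneg M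
  set D := ∫ x, f x * u x ∂μ with hD
  set I2 := ∫ x, f x * u x ^ 2 ∂μ with hI2
  set J2 := ∫ x, p x * u x ^ 2 ∂μ with hJ2
  set Q := ∫ x, q x ∂μ with hQ
  have hQ0 : 0 ≤ Q := integral_nonneg hq0
  have hJ20 : 0 ≤ J2 := integral_nonneg fun x => mul_nonneg (hp0 x) (sq_nonneg _)
  have hI20 : 0 ≤ I2 := integral_nonneg fun x => mul_nonneg (hf0 x) (sq_nonneg _)
  -- Q ≤ 1
  have hQ1 : Q ≤ 1 := by
    have hle : ∀ x, q x ≤ (1-2*l) * f x + (2*l) * g x := fun x =>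
      Real.geom_mean_le_arith_mean2_weighted hl2.le (by linarith) (hf0 x) (hg0 x) (by ring)
    have hbi : Integrable (fun x => (1-2*l) * f x + (2*l) * g x) μ :=
      (hfi.const_mul _).add (hgi.const_mul _)
    have := integral_mono hqint hbi hle
    rwa [integral_add (hfi.const_mul _) (hgi.const_mul _), integral_const_mul,
      integral_const_mul, hf1, hg1, mul_one, mul_one,
      show (1-2*l) + 2*l = 1 by ring] at this
  -- I2 ≤ S
  have hI2S : I2 ≤ S := by
    rw [hS, Real.le_sqrt hI20 hM0]
    have hnn : 0 ≤ ∫ x, (f x * u x ^ 4 - 2*I2*(f x * u x ^ 2) + I2^2 * f x) ∂μ := by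
      have : ∀ x, f x * (u x ^ 2 - I2)^2
          = f x * u x ^ 4 - 2*I2*(f x * u x ^ 2) + I2^2 * f x := fun x => by ring
      rw [← integral_congr_ae (Filter.Eventually.of_forall this)]
      exact integral_nonneg fun x => mul_nonneg (hf0 x) (sq_nonneg _)
    have hia : Integrable (fun x => f x * u x ^ 4 - 2*I2*(f x * u x ^ 2)) μ :=
      hmom.sub (hfu2.const_mul (2*I2))
    have hmom' : Integrable (fun x => f x * u x ^ 4) μ := hmom
    rw [integral_add hia (hfi.const_mul (I2^2)),
      integral_sub hmom' (hfu2.const_mul (2*I2)), integral_const_mul, integral_const_mul,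
      hf1] at hnn
    nlinarith [hnn]
  -- J2 ≤ S
  have hJb : ∀ t : ℝ, 0 < t → J2 ≤ t/2*M + 1/(2*t)*Q := by
    intro t ht
    have hmom' : Integrable (fun x => f x * u x ^ 4) μ := hmom
    have hbi : Integrable (fun x => t/2 * (f x * u x ^ 4) + 1/(2*t) * q x) μ :=
      (hmom'.const_mul _).add (hqint.const_mul _)
    have := integral_mono hpu2 hbi (hkeyB t ht)
    rwa [integral_add (hmom'.const_mul _) (hqint.const_mul _), integral_const_mul,
      integral_const_mul] at this
  have hJ2S : J2 ≤ S := by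
    rcases eq_or_lt_of_le hM0 with hMz | hMpos
    · have hSz : S = 0 := by rw [hS, ← hMz, Real.sqrt_zero]
      rw [hSz]
      by_contra hcon
      push_neg at hcon
      have := hJb (1/J2) (by positivity)
      rw [← hMz] at this
      have h1 : 1/(2*(1/J2)) = J2/2 := by field_simp
      nlinarith
    · have hsq : S^2 = M := Real.sq_sqrt hM0
      have hSpos : 0 < S := Real.sqrt_pos.mpr hMpos
      have := hJb (1/S) (by positivity)
      have h1 : (1/S)/2*M = S/2 := by rw [← hsq]; field_simp
      have h2 : 1/(2*(1/S)) = S/2 := by field_simp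
      rw [h1, h2] at this
      nlinarith
  -- integrate the main pointwise inequality
  have h1i : Integrable (fun x => f x - l*(f x * u x)) μ := hfi.sub (hfu1.const_mul l)
  have h2i : Integrable (fun x => 2/3*(f x * u x ^ 2) + 1/3*(p x * u x ^ 2)) μ :=
    (hfu2.const_mul (2/3)).add (hpu2.const_mul (1/3))
  have h3i : Integrable (fun x => l^2/2*(2/3*(f x * u x ^ 2) + 1/3*(p x * u x ^ 2))) μ :=
    h2i.const_mul _
  have hRHSint : Integrable (fun x => f x - l*(f x * u x)
      + l^2/2*(2/3*(f x * u x ^ 2) + 1/3*(p x * u x ^ 2))) μ := h1i.add h3i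
  have hmain : (∫ x, p x ∂μ) ≤ 1 - l*D + l^2/2*(2/3*I2 + 1/3*J2) := by
    have := integral_mono hpint hRHSint hkeyA
    rwa [integral_add h1i h3i, integral_sub hfi (hfu1.const_mul l),
      integral_const_mul, integral_const_mul,
      integral_add (hfu2.const_mul _) (hpu2.const_mul _), integral_const_mul,
      integral_const_mul, hf1] at this
  have hmix : 2/3*I2 + 1/3*J2 ≤ S := by linarith
  have hmain2 : (∫ x, p x ∂μ) ≤ 1 - l*D + l^2/2*S := by
    have := mul_le_mul_of_nonneg_left hmix (by positivity : (0:ℝ) ≤ l^2/2)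
    linarith
  -- conclusion
  have hgoalD : (∫ x, f x * Real.log (f x / g x) ∂μ) = D := by rw [hD]
  have hgoalM : (∫ x, f x * Real.log (f x / g x) ^ 4 ∂μ) = M := by rw [hM]
  have hgoalH : (∫ x, f x ^ (1 - l) * g x ^ l ∂μ) = ∫ x, p x ∂μ := by rw [hp]
  set H := ∫ x, p x ∂μ with hH
  have hH0 : 0 ≤ H := integral_nonneg hp0
  rcases eq_or_lt_of_le hH0 with hHz | hHpos
  · -- H = 0 : then p = 0 a.e., hence f * u = 0 a.e., so D = 0
    have hpz : p =ᵐ[μ] 0 := (integral_eq_zero_iff_of_nonneg hp0 hpint).mp hHz.symm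
    have hfz : (fun x => f x * u x) =ᵐ[μ] 0 := by
      filter_upwards [hpz] with x hx
      simp only [hp, Pi.zero_apply] at hx ⊢
      rcases mul_eq_zero.mp hx with h | h
      · have := (Real.rpow_eq_zero_iff_of_nonneg (hf0 x)).mp h
        rw [this.1, zero_mul]
      · have := (Real.rpow_eq_zero_iff_of_nonneg (hg0 x)).mp h
        have hux : u x = 0 := by simp only [hu, this.1, div_zero, Real.log_zero]
        rw [hux, mul_zero]
    have hDz : D = 0 := by rw [hD, integral_congr_ae hfz]; simp
    rw [hDz, ← hHz, Real.log_zero, mul_zero, sub_zero]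
    positivity
  · have hlog := Real.log_le_sub_one_of_pos hHpos
    have hstep : Real.log H ≤ -(l*D) + l^2/2*S := by linarith [hmain2]
    have hstep2 : (1/l) * Real.log H ≤ (1/l) * (-(l*D) + l^2/2*S) :=
      mul_le_mul_of_nonneg_left hstep (by positivity)
    have hstep3 : (1/l) * (-(l*D) + l^2/2*S) = -D + l/2*S := by
      field_simp
    linarith
end

section
/- Let A ∈ ℝ^{d×d} be a positive definite matrix and x ∈ ℝ^d a unit vector. Let G_1 = (A + n·xxᵀ)^{-1} and G_2 = lim_{ρ→∞}(A + ρ·xxᵀ)^{-1} = A^{-1} - (A^{-1}xxᵀA^{-1})/(xᵀA^{-1}x). Then the operator norm satisfies ‖G_1 - G_2‖₂ ≤ σ_max(A^{-1}) / (1 + n·σ_min(A^{-1})). -/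
open Matrix

section Aux

variable {d : ℕ}

lemma aux_mul_vecMulVec (M : Matrix (Fin d) (Fin d) ℝ) (a b : Fin d → ℝ) :
    M * vecMulVec a b = vecMulVec (M *ᵥ a) b := by
  ext i j
  simp [mul_apply, vecMulVec_apply, mulVec, dotProduct, Finset.sum_mul, mul_assoc]

lemma aux_vecMulVec_mul (M : Matrix (Fin d) (Fin d) ℝ) (a b : Fin d → ℝ) :
    vecMulVec a b * M = vecMulVec a (b ᵥ* M) := by
  ext i j
  simp [mul_apply, vecMulVec_apply, vecMul, dotProduct, Finset.mul_sum, mul_assoc]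

lemma aux_vecMulVec_mul_vecMulVec (a b c e : Fin d → ℝ) :
    vecMulVec a b * vecMulVec c e = (b ⬝ᵥ c) • vecMulVec a e := by
  ext i j
  simp only [mul_apply, vecMulVec_apply, Matrix.smul_apply, smul_eq_mul, dotProduct, Finset.sum_mul]
  exact Finset.sum_congr rfl fun k _ => by ring

lemma aux_smul_vecMulVec_mulVec (c : ℝ) (w v : Fin d → ℝ) :
    (c • vecMulVec w w) *ᵥ v = (c * (w ⬝ᵥ v)) • w := by
  funext i
  simp only [Pi.smul_apply, smul_eq_mul, mulVec, dotProduct, Matrix.smul_apply,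
    vecMulVec_apply, Finset.mul_sum, Finset.sum_mul]
  exact Finset.sum_congr rfl fun k _ => by ring

end Aux

/-- Lemma 29 of the paper: for a positive definite `A` and unit vector `x`, with
`G₁ = (A + n·xxᵀ)⁻¹` and `G₂ = A⁻¹ - (A⁻¹xxᵀA⁻¹)/(xᵀA⁻¹x)` (the limit of `(A + ρxxᵀ)⁻¹`
as `ρ → ∞`), the operator norm of `G₁ - G₂` is at most `σ_max(A⁻¹)/(1 + n·σ_min(A⁻¹))`,
where `σ_max, σ_min` are characterized by bounding the quadratic form of `A⁻¹`. -/
theorem opNorm_inv_perturbation_bound {d : ℕ} (A : Matrix (Fin d) (Fin d) ℝ)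
    (hA : A.PosDef) (x : Fin d → ℝ) (hx : x ⬝ᵥ x = 1)
    (n : ℝ) (hn : 0 ≤ n) (σmax σmin : ℝ)
    (hσmax : ∀ v : Fin d → ℝ, v ⬝ᵥ (A⁻¹ *ᵥ v) ≤ σmax * (v ⬝ᵥ v))
    (hσmin : ∀ v : Fin d → ℝ, σmin * (v ⬝ᵥ v) ≤ v ⬝ᵥ (A⁻¹ *ᵥ v)) (hσminpos : 0 < σmin)
    (G₁ G₂ : Matrix (Fin d) (Fin d) ℝ)
    (hG₁ : G₁ = (A + n • vecMulVec x x)⁻¹)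
    (hG₂ : G₂ = A⁻¹ - (x ⬝ᵥ (A⁻¹ *ᵥ x))⁻¹ • (A⁻¹ * vecMulVec x x * A⁻¹)) :
    ‖Matrix.toEuclideanCLM (𝕜 := ℝ) (G₁ - G₂)‖ ≤ σmax / (1 + n * σmin) := by
  set B : Matrix (Fin d) (Fin d) ℝ := A⁻¹ with hBdef
  have hxne : x ≠ 0 := by
    intro h
    rw [h] at hx
    simp at hx
  have hBsymm : Bᵀ = B := by
    have := hA.isHermitian.inv
    simpa [Matrix.IsHermitian, Matrix.conjTranspose_eq_transpose_of_trivial] using this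
  have hBnn : ∀ v : Fin d → ℝ, 0 ≤ v ⬝ᵥ (B *ᵥ v) := fun v => by
    simpa using hA.inv.posSemidef.dotProduct_mulVec_nonneg v
  set s : ℝ := x ⬝ᵥ (B *ᵥ x) with hsdef
  have hs : 0 < s := by simpa using hA.inv.dotProduct_mulVec_pos hxne
  set w : Fin d → ℝ := B *ᵥ x with hwdef
  have hvm : x ᵥ* B = w := by
    conv_lhs => rw [← hBsymm, vecMul_transpose]
  have hsmin : σmin ≤ s := by
    have := hσmin x
    rw [hx] at this
    linarith
  have hsmax : s ≤ σmax := by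
    have := hσmax x
    rw [hx] at this
    linarith
  have hσmaxpos : 0 < σmax := lt_of_lt_of_le hσminpos (le_trans hsmin hsmax)
  have hden : (0:ℝ) < 1 + n * s := by nlinarith
  have hdenmin : (0:ℝ) < 1 + n * σmin := by nlinarith
  have hAB : A * B = 1 := mul_nonsing_inv A (isUnit_iff_ne_zero.mpr hA.det_pos.ne')
  set c : ℝ := n / (1 + n * s) with hcdef
  have hc : c * (1 + n * s) = n := div_mul_cancel₀ n hden.ne'
  -- Sherman–Morrison
  have hAw : A *ᵥ w = x := by
    rw [hwdef, mulVec_mulVec, hAB, one_mulVec]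
  have hSM : (A + n • vecMulVec x x) * (B - c • vecMulVec w w) = 1 := by
    have h1 : A * vecMulVec w w = vecMulVec x w := by
      rw [aux_mul_vecMulVec, hAw]
    have h2 : vecMulVec x x * B = vecMulVec x w := by
      rw [aux_vecMulVec_mul, hvm]
    have h3 : vecMulVec x x * vecMulVec w w = s • vecMulVec x w := by
      rw [aux_vecMulVec_mul_vecMulVec]
    have hncs : c * n * s = n - c := by linear_combination hc
    rw [add_mul, mul_sub, mul_sub, Matrix.mul_smul, Matrix.mul_smul,
      Matrix.smul_mul, Matrix.smul_mul, hAB, h1, h2, h3, smul_smul, smul_smul,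
      hncs, sub_smul]
    abel
  have hG₁' : G₁ = B - c • vecMulVec w w := by
    rw [hG₁]
    exact inv_eq_right_inv hSM
  have hG₂' : G₂ = B - s⁻¹ • vecMulVec w w := by
    rw [hG₂]
    congr 1
    rw [aux_mul_vecMulVec, aux_vecMulVec_mul, hvm]
  set q : ℝ := w ⬝ᵥ w with hqdef
  have hqnn : 0 ≤ q := by
    have : q = ∑ i, w i * w i := rfl
    rw [this]
    exact Finset.sum_nonneg fun i _ => mul_self_nonneg _
  set c' : ℝ := s⁻¹ - c with hc'def
  have hdiff : G₁ - G₂ = c' • vecMulVec w w := by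
    rw [hG₁', hG₂', hc'def, sub_smul]
    abel
  have hc'eq : c' = 1 / (s * (1 + n * s)) := by
    rw [hc'def, hcdef]
    field_simp
    ring
  have hc'nn : 0 ≤ c' := by
    rw [hc'eq]
    positivity
  -- Cauchy–Schwarz for the quadratic form of B : q^2 ≤ s * (w ⬝ᵥ B *ᵥ w)
  have hxBw : x ⬝ᵥ (B *ᵥ w) = q := by
    rw [dotProduct_mulVec, hvm]
  have hwBx : w ⬝ᵥ (B *ᵥ x) = q := rfl
  have hCS : q ^ 2 ≤ s * (w ⬝ᵥ (B *ᵥ w)) := by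
    have h0 := hBnn (s • w - q • x)
    have hs' : x ⬝ᵥ (B *ᵥ x) = s := rfl
    have hexp : (s • w - q • x) ⬝ᵥ (B *ᵥ (s • w - q • x))
        = s ^ 2 * (w ⬝ᵥ (B *ᵥ w)) - 2 * s * q * q + q ^ 2 * s := by
      simp only [mulVec_sub, mulVec_smul, sub_dotProduct, dotProduct_sub,
        smul_dotProduct, dotProduct_smul, smul_eq_mul, hxBw, hwBx, hs']
      ring
    rw [hexp] at h0
    nlinarith
  have hwBw : w ⬝ᵥ (B *ᵥ w) ≤ σmax * q := hσmax w
  have hqle : q ≤ s * σmax := by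
    rcases hqnn.eq_or_lt with h | h
    · rw [← h]
      positivity
    · have : q * q ≤ s * σmax * q := by nlinarith
      exact le_of_mul_le_mul_right this h
  -- the operator norm bound
  have hbound : ‖Matrix.toEuclideanCLM (𝕜 := ℝ) (G₁ - G₂)‖ ≤ c' * q := by
    apply ContinuousLinearMap.opNorm_le_bound _ (mul_nonneg hc'nn hqnn)
    intro v
    set v' : Fin d → ℝ := WithLp.equiv 2 _ v with hv'def
    have happ : Matrix.toEuclideanCLM (𝕜 := ℝ) (G₁ - G₂) v
        = (WithLp.equiv 2 (Fin d → ℝ)).symm ((c' * (w ⬝ᵥ v')) • w) := by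
      have h : Matrix.toEuclideanCLM (𝕜 := ℝ) (G₁ - G₂) v
          = (WithLp.equiv 2 (Fin d → ℝ)).symm (toLin' (G₁ - G₂) ((WithLp.equiv 2 _) v)) := rfl
      rw [h, toLin'_apply, hdiff, aux_smul_vecMulVec_mulVec]
    set wE : EuclideanSpace ℝ (Fin d) := (WithLp.equiv 2 (Fin d → ℝ)).symm w with hwEdef
    have hinner : inner ℝ wE v = w ⬝ᵥ v' := by
      rw [PiLp.inner_apply]
      simp only [hwEdef, hv'def, WithLp.equiv_symm_apply, WithLp.equiv_apply, PiLp.toLp_apply,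
        RCLike.inner_apply, starRingEnd_apply, star_trivial, dotProduct]
      exact Finset.sum_congr rfl fun i _ => mul_comm _ _
    have hwEnorm : ‖wE‖ ^ 2 = q := by
      rw [← real_inner_self_eq_norm_sq, PiLp.inner_apply]
      simp only [hwEdef, WithLp.equiv_symm_apply, PiLp.toLp_apply, RCLike.inner_apply,
        starRingEnd_apply, star_trivial]
      rfl
    rw [happ]
    have : (WithLp.equiv 2 (Fin d → ℝ)).symm ((c' * (w ⬝ᵥ v')) • w)
        = (c' * (w ⬝ᵥ v')) • wE := rfl
    rw [this, norm_smul]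
    have habs : |w ⬝ᵥ v'| ≤ ‖wE‖ * ‖v‖ := by
      rw [← hinner]
      exact abs_real_inner_le_norm wE v
    have : ‖c' * (w ⬝ᵥ v')‖ = c' * |w ⬝ᵥ v'| := by
      rw [Real.norm_eq_abs, abs_mul, abs_of_nonneg hc'nn]
    rw [this]
    calc c' * |w ⬝ᵥ v'| * ‖wE‖ ≤ c' * (‖wE‖ * ‖v‖) * ‖wE‖ := by
          have h1 : c' * |w ⬝ᵥ v'| ≤ c' * (‖wE‖ * ‖v‖) :=
            mul_le_mul_of_nonneg_left habs hc'nn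
          exact mul_le_mul_of_nonneg_right h1 (norm_nonneg _)
      _ = c' * (‖wE‖ ^ 2) * ‖v‖ := by ring
      _ = c' * q * ‖v‖ := by rw [hwEnorm]
  refine hbound.trans ?_
  -- final scalar inequality
  have h1 : c' * q ≤ σmax / (1 + n * s) := by
    rw [hc'eq, div_mul_eq_mul_div, one_mul,
      div_le_div_iff₀ (mul_pos hs hden) hden]
    nlinarith
  refine h1.trans ?_
  apply div_le_div_of_nonneg_left hσmaxpos.le hdenmin
  nlinarith
end

section
/- Consider a multi-armed bandit instance f with A arms, unit-variance Gaussian rewards, mean rewards μ_1 > μ_i for all i ≥ 2, and gaps Δ_i = μ_1 - μ_i. For two Gaussian bandit instances f (means μ) and g (means μ') with KL divergence per arm D_KL(f[i]‖g[i]) = (μ_i - μ_i')²/2, if g's optimal arm is i ≠ 1, then for any weights w_1, w_i ≥ 0, w_1·(μ_1-μ_1')²/2 + w_i·(μ_i-μ_i')²/2 ≥ (1/2)·(w_1 w_i/(w_1+w_i))·Δ_i², where the minimum over feasible (μ_1', μ_i') with μ_1' ≤ μ_i' is attained at μ_1' = μ_i' ∈ [μ_i, μ_1]. -/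
/-- The key computation in Proposition 3 (Gaussian multi-armed bandits): if arm `0` is the
unique optimal arm of `f` (means `μ`) and arm `i ≠ 0` is optimal for `g` (means `μ'`), then
for any nonnegative weights `w₁, wᵢ`,
`w₁(μ₀-μ₀')²/2 + wᵢ(μᵢ-μᵢ')²/2 ≥ (1/2)·(w₁wᵢ/(w₁+wᵢ))·Δᵢ²` with `Δᵢ = μ₀ - μᵢ`. -/
theorem gaussian_bandit_kl_weighted_lower_bound {A : ℕ} [NeZero A]
    (μ μ' : Fin A → ℝ) (i : Fin A) (hi : i ≠ 0)
    (hopt : ∀ j : Fin A, j ≠ 0 → μ j < μ 0)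
    (hopt' : ∀ j : Fin A, μ' j ≤ μ' i)
    (w₁ wᵢ : ℝ) (hw₁ : 0 ≤ w₁) (hwᵢ : 0 ≤ wᵢ) :
    w₁ * (μ 0 - μ' 0) ^ 2 / 2 + wᵢ * (μ i - μ' i) ^ 2 / 2
      ≥ (1 / 2) * (w₁ * wᵢ / (w₁ + wᵢ)) * (μ 0 - μ i) ^ 2 := by
  set a := μ 0 - μ' 0 with ha
  set b := μ i - μ' i with hb
  have h1 : μ' 0 ≤ μ' i := hopt' 0
  have h2 : μ i < μ 0 := hopt i hi
  have hab : μ 0 - μ i ≤ a - b := by simp [ha, hb]; linarith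
  have hΔ : 0 < μ 0 - μ i := by linarith
  have hsq : (μ 0 - μ i) ^ 2 ≤ (a - b) ^ 2 := by
    apply sq_le_sq' <;> nlinarith
  rcases eq_or_lt_of_le (by positivity : (0:ℝ) ≤ w₁ + wᵢ) with hs | hs
  · rw [← hs]
    simp
    positivity
  · have key : w₁ * wᵢ / (w₁ + wᵢ) * (μ 0 - μ i) ^ 2 ≤ w₁ * a ^ 2 + wᵢ * b ^ 2 := by
      rw [div_mul_eq_mul_div, div_le_iff₀ hs]
      nlinarith [sq_nonneg (w₁ * a + wᵢ * b),
        mul_nonneg (mul_nonneg hw₁ hwᵢ) (sub_nonneg.2 hsq)]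
    linarith
end

section
/- For any two probability measures P and Q on a common measurable space, the total variation distance satisfies D_TV(P‖Q) ≤ 1 - (1/2)·exp(-D_KL(P‖Q)). -/
open MeasureTheory Real

open scoped ENNReal

/-- The Bretagnolle–Huber inequality (extended Pinsker inequality): for any two probability
measures `P, Q`, the total variation distance `sup_A |P(A) - Q(A)|` is at most
`1 - (1/2)·exp(-D_KL(P‖Q))`, where `D_KL(P‖Q) = ∫ ln(dP/dQ) dP`. -/
theorem bretagnolle_huber {Ω : Type*} [MeasurableSpace Ω]
    (P Q : Measure Ω) [IsProbabilityMeasure P] [IsProbabilityMeasure Q]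
    (hac : P ≪ Q)
    (hint : Integrable (fun x => Real.log ((P.rnDeriv Q x).toReal)) P) :
    ∀ s : Set Ω, MeasurableSet s →
      |(P s).toReal - (Q s).toReal|
        ≤ 1 - (1 / 2) * Real.exp (-(∫ x, Real.log ((P.rnDeriv Q x).toReal) ∂P)) := by
  intro s hs
  set f : Ω → ℝ≥0∞ := P.rnDeriv Q with hfdef
  have hf_meas : Measurable f := Measure.measurable_rnDeriv P Q
  set m : Ω → ℝ≥0∞ := fun x => min (f x) 1 with hmdef
  have hm_meas : Measurable m := hf_meas.min measurable_const
  have hfint : ∫⁻ x, f x ∂Q = 1 := by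
    rw [Measure.lintegral_rnDeriv hac]; simp
  have h_setP : ∀ t : Set Ω, MeasurableSet t → P t = ∫⁻ x in t, f x ∂Q := by
    intro t ht
    rw [← Measure.setLIntegral_rnDeriv hac]
  -- the integral of min(f, 1)
  set I : ℝ≥0∞ := ∫⁻ x, m x ∂Q with hIdef
  have hI_le_one : I ≤ 1 := by
    calc I ≤ ∫⁻ _, 1 ∂Q := lintegral_mono fun x => min_le_right _ _
    _ = 1 := by simp
  have hI_ne_top : I ≠ ∞ := (hI_le_one.trans_lt ENNReal.one_lt_top).ne
  set c : ℝ := I.toReal with hcdef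
  have hc_nonneg : 0 ≤ c := ENNReal.toReal_nonneg
  -- Step A : |P s - Q s| ≤ 1 - c
  have stepA : |(P s).toReal - (Q s).toReal| ≤ 1 - c := by
    have hsplit : I = (∫⁻ x in s, m x ∂Q) + ∫⁻ x in sᶜ, m x ∂Q :=
      (lintegral_add_compl _ hs).symm
    have h1 : P s + I ≤ 1 + Q s := by
      have hms : ∫⁻ x in s, m x ∂Q ≤ Q s := by
        calc ∫⁻ x in s, m x ∂Q ≤ ∫⁻ _ in s, 1 ∂Q :=
              lintegral_mono fun x => min_le_right _ _
        _ = Q s := by simp [Measure.restrict_apply_univ]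
      have hmc : ∫⁻ x in sᶜ, m x ∂Q ≤ P sᶜ := by
        rw [h_setP sᶜ hs.compl]
        exact lintegral_mono fun x => min_le_left _ _
      calc P s + I ≤ P s + (Q s + P sᶜ) := by
            rw [hsplit]; exact add_le_add le_rfl (add_le_add hms hmc)
      _ = (P s + P sᶜ) + Q s := by ring
      _ = 1 + Q s := by rw [measure_add_measure_compl hs]; simp
    have h2 : Q s + I ≤ 1 + P s := by
      have hms : ∫⁻ x in s, m x ∂Q ≤ P s := by
        rw [h_setP s hs]
        exact lintegral_mono fun x => min_le_left _ _
      have hmc : ∫⁻ x in sᶜ, m x ∂Q ≤ Q sᶜ := by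
        calc ∫⁻ x in sᶜ, m x ∂Q ≤ ∫⁻ _ in sᶜ, 1 ∂Q :=
              lintegral_mono fun x => min_le_right _ _
        _ = Q sᶜ := by simp [Measure.restrict_apply_univ]
      calc Q s + I ≤ Q s + (P s + Q sᶜ) := by
            rw [hsplit]; exact add_le_add le_rfl (add_le_add hms hmc)
      _ = (Q s + Q sᶜ) + P s := by ring
      _ = 1 + P s := by rw [measure_add_measure_compl hs]; simp
    have hPs : P s ≠ ∞ := measure_ne_top _ _
    have hQs : Q s ≠ ∞ := measure_ne_top _ _
    have h1' : (P s).toReal + c ≤ 1 + (Q s).toReal := by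
      have := ENNReal.toReal_mono (by simp [hQs]) h1
      rwa [ENNReal.toReal_add hPs hI_ne_top, ENNReal.toReal_add (by simp) hQs,
        ENNReal.toReal_one] at this
    have h2' : (Q s).toReal + c ≤ 1 + (P s).toReal := by
      have := ENNReal.toReal_mono (by simp [hPs]) h2
      rwa [ENNReal.toReal_add hQs hI_ne_top, ENNReal.toReal_add (by simp) hPs,
        ENNReal.toReal_one] at this
    rw [abs_sub_le_iff]
    constructor <;> linarith
  -- Step B : exp (-KL) ≤ 2 * c
  set KL : ℝ := ∫ x, Real.log ((f x).toReal) ∂P with hKLdef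
  have stepB : Real.exp (-KL) ≤ 2 * c := by
    -- the function g = exp(-(1/2) log f)
    set g : Ω → ℝ := fun x => Real.exp (-(2⁻¹) * Real.log ((f x).toReal)) with hgdef
    have hg_meas : Measurable g :=
      (((hf_meas.ennreal_toReal).log).const_mul _).exp
    have hg_nonneg : ∀ x, 0 ≤ g x := fun x => (Real.exp_pos _).le
    -- integrability of g w.r.t. P
    have hgi : Integrable g P := by
      have h_exp : (fun x => Real.exp (- MeasureTheory.llr P Q x))
          =ᵐ[P] fun x => (Q.rnDeriv P x).toReal := exp_neg_llr hac
      refine Integrable.mono' ((Measure.integrable_toReal_rnDeriv (μ := Q) (ν := P)).add (integrable_const 1)) 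
        hg_meas.aestronglyMeasurable ?_
      filter_upwards [h_exp] with x hx
      rw [Real.norm_of_nonneg (hg_nonneg x)]
      have : g x ≤ max 1 (Real.exp (- MeasureTheory.llr P Q x)) := by
        rcases le_or_gt 0 (Real.log ((f x).toReal)) with h | h
        · exact le_max_of_le_left (by
            rw [← Real.exp_zero]
            exact Real.exp_le_exp.2 (by nlinarith))
        · refine le_max_of_le_right (Real.exp_le_exp.2 ?_)
          simp only [MeasureTheory.llr]
          nlinarith
      refine this.trans ?_
      rw [hx]
      simp only [Pi.add_apply]
      have hr : 0 ≤ (Q.rnDeriv P x).toReal := ENNReal.toReal_nonneg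
      exact max_le (by linarith) (by linarith)
    -- Jensen's inequality
    have h_jensen : Real.exp (-(2⁻¹) * KL) ≤ ∫ x, g x ∂P := by
      have hconv : ConvexOn ℝ Set.univ Real.exp := convexOn_exp
      have hfi : Integrable (fun x => -(2⁻¹) * Real.log ((f x).toReal)) P :=
        hint.const_mul _
      have := hconv.map_integral_le (g := Real.exp)
        (f := fun x => -(2⁻¹) * Real.log ((f x).toReal))
        Real.continuous_exp.continuousOn isClosed_univ
        (Filter.Eventually.of_forall fun x => Set.mem_univ _) hfi ?_
      · rwa [integral_const_mul] at this
      · exact hgi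
    -- ∫ g dP = (∫⁻ √f dQ).toReal
    set L : ℝ≥0∞ := ∫⁻ x, (f x) ^ (2⁻¹ : ℝ) ∂Q with hLdef
    have h_int_eq : ∫ x, g x ∂P = L.toReal := by
      rw [integral_eq_lintegral_of_nonneg_ae (Filter.Eventually.of_forall hg_nonneg)
        hg_meas.aestronglyMeasurable]
      congr 1
      rw [← MeasureTheory.lintegral_rnDeriv_mul hac (f := fun x => ENNReal.ofReal (g x))
        (hg_meas.ennreal_ofReal).aemeasurable]
      refine lintegral_congr_ae ?_
      filter_upwards [Measure.rnDeriv_lt_top P Q] with x hx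
      show f x * ENNReal.ofReal (g x) = f x ^ (2⁻¹ : ℝ)
      rcases eq_or_ne (f x) 0 with h0 | h0
      · rw [h0, ENNReal.zero_rpow_of_pos (by norm_num), zero_mul]
      · set t : ℝ := (f x).toReal with htdef
        have ht : 0 < t := ENNReal.toReal_pos h0 hx.ne
        have hfx : f x = ENNReal.ofReal t := (ENNReal.ofReal_toReal hx.ne).symm
        have hg_eq : g x = t ^ (-2⁻¹ : ℝ) := by
          rw [Real.rpow_def_of_pos ht, mul_comm]
        calc f x * ENNReal.ofReal (g x) = ENNReal.ofReal (t * t ^ (-2⁻¹ : ℝ)) := by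
              rw [hg_eq, hfx, ← ENNReal.ofReal_mul ht.le]
        _ = ENNReal.ofReal (t ^ (2⁻¹ : ℝ)) := by
              congr 1
              nth_rewrite 1 [← Real.rpow_one t]
              rw [← Real.rpow_add ht]
              norm_num
        _ = f x ^ (2⁻¹ : ℝ) := by
              rw [← ENNReal.ofReal_rpow_of_pos ht, ← hfx]
    -- Cauchy-Schwarz: L^2 ≤ 2 * I
    have hCS : L ≤ I ^ (2⁻¹ : ℝ) * 2 ^ (2⁻¹ : ℝ) := by
      have hpq : Real.HolderConjugate 2 2 := Real.HolderConjugate.two_two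
      have h := ENNReal.lintegral_mul_le_Lp_mul_Lq Q hpq
        (f := fun x => (m x) ^ (2⁻¹ : ℝ)) (g := fun x => (max (f x) 1) ^ (2⁻¹ : ℝ))
        (hm_meas.pow_const _).aemeasurable
        ((hf_meas.max measurable_const).pow_const _).aemeasurable
      have hLeq : L = ∫⁻ a, ((fun x => (m x) ^ (2⁻¹ : ℝ)) * fun x => (max (f x) 1) ^ (2⁻¹ : ℝ)) a ∂Q := by
        refine lintegral_congr fun x => ?_
        simp only [Pi.mul_apply]
        rw [← ENNReal.mul_rpow_of_nonneg _ _ (by norm_num), min_mul_max, mul_one]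
      have hmax : ∫⁻ a, ((max (f a) 1) ^ (2⁻¹:ℝ)) ^ (2:ℝ) ∂Q ≤ 2 := by
        have heq : ∀ a : Ω, ((max (f a) 1) ^ (2⁻¹:ℝ)) ^ (2:ℝ) = max (f a) 1 := by
          intro a
          rw [← ENNReal.rpow_mul]
          norm_num
        calc ∫⁻ a, ((max (f a) 1) ^ (2⁻¹:ℝ)) ^ (2:ℝ) ∂Q ≤ ∫⁻ a, (f a + 1) ∂Q := by
              refine lintegral_mono fun a => ?_
              rw [heq a]
              exact max_le le_self_add le_add_self
        _ = 2 := by rw [lintegral_add_right _ measurable_const, hfint]; simp; norm_num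
      have hmin : ∫⁻ a, ((m a) ^ (2⁻¹:ℝ)) ^ (2:ℝ) ∂Q = I := by
        refine lintegral_congr fun a => ?_
        rw [← ENNReal.rpow_mul]
        norm_num
      rw [hLeq]
      calc ∫⁻ a, ((fun x => (m x) ^ (2⁻¹ : ℝ)) * fun x => (max (f x) 1) ^ (2⁻¹ : ℝ)) a ∂Q
          ≤ (∫⁻ a, ((m a) ^ (2⁻¹ : ℝ)) ^ (2:ℝ) ∂Q) ^ ((1:ℝ)/2)
            * (∫⁻ a, ((max (f a) 1) ^ (2⁻¹ : ℝ)) ^ (2:ℝ) ∂Q) ^ ((1:ℝ)/2) := h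
      _ ≤ I ^ (2⁻¹ : ℝ) * 2 ^ (2⁻¹ : ℝ) := by
          rw [hmin, show (1:ℝ)/2 = 2⁻¹ by norm_num]
          exact mul_le_mul' le_rfl (ENNReal.rpow_le_rpow hmax (by norm_num))
    -- pass to reals
    have hRHS_ne : I ^ (2⁻¹ : ℝ) * 2 ^ (2⁻¹ : ℝ) ≠ ∞ := by
      apply ENNReal.mul_ne_top
      · exact ENNReal.rpow_ne_top_of_nonneg (by norm_num) hI_ne_top
      · exact ENNReal.rpow_ne_top_of_nonneg (by norm_num) (by norm_num)
    have hL_real : L.toReal ≤ Real.sqrt c * Real.sqrt 2 := by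
      have h2 := ENNReal.toReal_mono hRHS_ne hCS
      rw [ENNReal.toReal_mul, ← ENNReal.toReal_rpow, ← ENNReal.toReal_rpow] at h2
      calc L.toReal ≤ I.toReal ^ (2⁻¹:ℝ) * ((2:ℝ≥0∞)).toReal ^ (2⁻¹:ℝ) := h2
      _ = Real.sqrt c * Real.sqrt 2 := by
          rw [Real.sqrt_eq_rpow, Real.sqrt_eq_rpow, hcdef,
            show ((2:ℝ≥0∞)).toReal = (2:ℝ) from by simp]
          norm_num
    have h_chain : Real.exp (-(2⁻¹) * KL) ≤ Real.sqrt c * Real.sqrt 2 := by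
      rw [← h_int_eq] at hL_real
      exact h_jensen.trans hL_real
    have hsq := mul_le_mul h_chain h_chain (Real.exp_pos _).le
      (by positivity)
    calc Real.exp (-KL) = Real.exp (-(2⁻¹) * KL) * Real.exp (-(2⁻¹) * KL) := by
          rw [← Real.exp_add]; ring_nf
    _ ≤ (Real.sqrt c * Real.sqrt 2) * (Real.sqrt c * Real.sqrt 2) := hsq
    _ = (Real.sqrt c * Real.sqrt c) * (Real.sqrt 2 * Real.sqrt 2) := by ring
    _ = 2 * c := by
          rw [Real.mul_self_sqrt hc_nonneg, Real.mul_self_sqrt (by norm_num)]; ring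
  -- combine
  have : (1:ℝ)/2 * Real.exp (-KL) ≤ c := by linarith
  linarith [stepA]
end
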